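/- Fix a vocabulary of N codepoints {e_t} in ℝ^k and let Π(x) assign each x to its nearest codepoint. For any probability density ν on a measurable set M ⊆ ℝ^k bounded below by ν_min > 0 on M, the average distortion satisfies ∫_M ‖x − e_{Π(x)}‖² ν(x) dx ≥ ν_min · (k/(k+2)) · ω_k^{−2/k} · vol(M)^{1+2/k} / N^{2/k}. -/
import Mathlib


open MeasureTheory
open Set

/-- Fundamental distortion bound for a finite codebook (Euclidean
version of the rate-distortion theorem).  For `N` codepoints in `ℝ^k`, nearest-
codepoint assignment, and a probability density `ν ≥ ν_min > 0` on a set `M` of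
volume `vol(M)`, the average distortion satisfies
`∫_M ‖x − e_{Π(x)}‖² ν ≥ ν_min (k/(k+2)) ω_k^{−2/k} vol(M)^{1+2/k} / N^{2/k}`.
The nearest-codepoint squared distance is `⨅ t, ‖x − e t‖²`, and the integral is
a Lebesgue `lintegral`. -/
theorem quantizer_distortion_lower_bound
    (k : ℕ) (hk : 0 < k) (N : ℕ) (hN : 0 < N)
    (e : Fin N → EuclideanSpace ℝ (Fin k))
    (M : Set (EuclideanSpace ℝ (Fin k))) (hM : MeasurableSet M)
    (VolM : ℝ) (hVolM : 0 ≤ VolM) (hvol : volume M = ENNReal.ofReal VolM)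
    (ν : EuclideanSpace ℝ (Fin k) → ℝ) (νmin : ℝ) (hνmin : 0 < νmin)
    (hν : ∀ x ∈ M, νmin ≤ ν x)
    (hprob : ∫⁻ x in M, ENNReal.ofReal (ν x) = 1) :
    ENNReal.ofReal (νmin * ((k : ℝ) / ((k : ℝ) + 2)) *
        (Real.pi ^ ((k : ℝ) / 2) / Real.Gamma ((k : ℝ) / 2 + 1)) ^ (-(2 : ℝ) / k) *
        VolM ^ ((1 : ℝ) + 2 / k) / (N : ℝ) ^ ((2 : ℝ) / k)) ≤
      ∫⁻ x in M, ENNReal.ofReal ((⨅ t, ‖x - e t‖ ^ 2) * ν x) := by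
  haveI : Nonempty (Fin N) := Fin.pos_iff_nonempty.mp hN
  haveI : Nonempty (Fin k) := Fin.pos_iff_nonempty.mp hk
  have hkR : (0:ℝ) < k := Nat.cast_pos.mpr hk
  set ω : ℝ := Real.pi ^ ((k:ℝ)/2) / Real.Gamma ((k:ℝ)/2 + 1) with hω
  have hΓ : 0 < Real.Gamma ((k:ℝ)/2 + 1) := Real.Gamma_pos_of_pos (by positivity)
  have hωpos : 0 < ω := div_pos (Real.rpow_pos_of_pos Real.pi_pos _) hΓ
  set c : ℝ := N * ω with hc
  have hcpos : 0 < c := by positivity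
  set f : EuclideanSpace ℝ (Fin k) → ℝ := fun x => ⨅ t, ‖x - e t‖ ^ 2 with hfdef
  have hfc : Continuous f := by
    have hfe : f = fun x => Finset.univ.inf' Finset.univ_nonempty (fun t => ‖x - e t‖^2) := by
      funext x; rw [Finset.inf'_univ_eq_ciInf]
    rw [hfe]
    exact Continuous.finset_inf'_apply Finset.univ_nonempty (fun i _ => by fun_prop)
  have hfnn : ∀ x, 0 ≤ f x := fun x => Real.iInf_nonneg (fun t => sq_nonneg _)
  -- step 1 : pull out νmin
  have step1 : ENNReal.ofReal νmin * ∫⁻ x in M, ENNReal.ofReal (f x) ≤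
      ∫⁻ x in M, ENNReal.ofReal (f x * ν x) := by
    rw [← lintegral_const_mul' _ _ ENNReal.ofReal_ne_top]
    refine lintegral_mono_ae ((ae_restrict_iff' hM).mpr (.of_forall fun x hx => ?_))
    rw [← ENNReal.ofReal_mul hνmin.le]
    exact ENNReal.ofReal_le_ofReal (by nlinarith [hfnn x, hν x hx])
  -- layer cake
  have hlayer : ∫⁻ x in M, ENNReal.ofReal (f x)
      = ∫⁻ s in Ioi (0:ℝ), (volume.restrict M) {x | s ≤ f x} :=
    lintegral_eq_lintegral_meas_le _ (Filter.Eventually.of_forall hfnn)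
      hfc.measurable.aemeasurable
  -- tail bound
  have tail : ∀ s : ℝ, 0 < s →
      ENNReal.ofReal (VolM - c * s ^ ((k:ℝ)/2)) ≤ (volume.restrict M) {x | s ≤ f x} := by
    intro s hs
    have hsub : {x | f x < s} ⊆ ⋃ t, Metric.ball (e t) (Real.sqrt s) := by
      intro x hx
      obtain ⟨t, ht⟩ := exists_eq_ciInf_of_finite (f := fun t => ‖x - e t‖ ^ 2)
      refine Set.mem_iUnion.mpr ⟨t, ?_⟩
      have h2 : ‖x - e t‖ ^ 2 < s := by rw [ht]; exact hx
      simpa [Metric.mem_ball, dist_eq_norm] using (Real.lt_sqrt (norm_nonneg _)).mpr h2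
    have hballval : ∀ t : Fin N, volume (Metric.ball (e t) (Real.sqrt s))
        = ENNReal.ofReal (ω * s ^ ((k:ℝ)/2)) := by
      intro t
      rw [EuclideanSpace.volume_ball]
      rw [Fintype.card_fin]
      rw [← ENNReal.ofReal_pow (Real.sqrt_nonneg s), ← ENNReal.ofReal_mul (by positivity)]
      congr 1
      have e1 : Real.sqrt s ^ k = s ^ ((k:ℝ)/2) := by
        rw [Real.sqrt_eq_rpow, ← Real.rpow_natCast (s ^ ((1:ℝ)/2)) k,
          ← Real.rpow_mul hs.le]
        ring_nf
      have e2 : Real.sqrt Real.pi ^ k = Real.pi ^ ((k:ℝ)/2) := by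
        rw [Real.sqrt_eq_rpow, ← Real.rpow_natCast (Real.pi ^ ((1:ℝ)/2)) k,
          ← Real.rpow_mul Real.pi_pos.le]
        ring_nf
      rw [e1, e2, hω]
      ring
    have hball : volume (⋃ t, Metric.ball (e t) (Real.sqrt s))
        ≤ ENNReal.ofReal (c * s ^ ((k:ℝ)/2)) := by
      refine (measure_iUnion_fintype_le _ _).trans ?_
      simp only [hballval]
      rw [Finset.sum_const, Finset.card_univ, Fintype.card_fin, nsmul_eq_mul, hc]
      rw [← ENNReal.ofReal_natCast N, ← ENNReal.ofReal_mul (Nat.cast_nonneg N)]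
      exact ENNReal.ofReal_le_ofReal (le_of_eq (by ring))
    have hsplit : ENNReal.ofReal VolM
        ≤ (volume.restrict M) {x | s ≤ f x} + ENNReal.ofReal (c * s ^ ((k:ℝ)/2)) := by
      have huniv : (volume.restrict M) Set.univ = ENNReal.ofReal VolM := by
        rw [Measure.restrict_apply_univ, hvol]
      have hsu : (Set.univ : Set (EuclideanSpace ℝ (Fin k))) ⊆ {x | s ≤ f x} ∪ {x | f x < s} :=
        fun x _ => (le_or_gt s (f x)).imp id id
      calc ENNReal.ofReal VolM = (volume.restrict M) Set.univ := huniv.symm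
        _ ≤ (volume.restrict M) ({x | s ≤ f x} ∪ {x | f x < s}) := measure_mono hsu
        _ ≤ (volume.restrict M) {x | s ≤ f x} + (volume.restrict M) {x | f x < s} :=
            measure_union_le _ _
        _ ≤ _ := by
            gcongr
            exact (Measure.restrict_apply_le _ _).trans ((measure_mono hsub).trans hball)
    rw [ENNReal.ofReal_sub _ (by positivity)]
    exact tsub_le_iff_right.mpr hsplit
  -- handle VolM = 0
  rcases eq_or_lt_of_le hVolM with h0 | hV
  · rw [← h0, Real.zero_rpow (by positivity : (0:ℝ) < 1 + 2/k).ne']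
    simp
  -- main case
  set s' : ℝ := (VolM / c) ^ ((2:ℝ)/k) with hs'
  have hs'pos : 0 < s' := Real.rpow_pos_of_pos (div_pos hV hcpos) _
  have hexp : ((2:ℝ)/k) * ((k:ℝ)/2) = 1 := by field_simp
  have hcs : c * s' ^ ((k:ℝ)/2) = VolM := by
    rw [hs', ← Real.rpow_mul (div_pos hV hcpos).le, hexp, Real.rpow_one,
      mul_div_cancel₀ _ hcpos.ne']
  have hrint : IntervalIntegrable (fun s : ℝ => s ^ ((k:ℝ)/2)) volume 0 s' := by
    apply Continuous.intervalIntegrable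
    exact continuous_iff_continuousAt.mpr fun x =>
      Real.continuousAt_rpow_const x _ (Or.inr (by positivity))
  have h3 : ∫ s in Set.Ioc (0:ℝ) s', (VolM - c * s ^ ((k:ℝ)/2))
      = ((k:ℝ)/((k:ℝ)+2)) * VolM * s' := by
    rw [← intervalIntegral.integral_of_le hs'pos.le,
      intervalIntegral.integral_sub intervalIntegrable_const (hrint.const_mul c),
      intervalIntegral.integral_const, intervalIntegral.integral_const_mul,
      integral_rpow (Or.inl (by linarith : (-1:ℝ) < (k:ℝ)/2)), Real.zero_rpow (by positivity : (0:ℝ) < (k:ℝ)/2 + 1).ne', sub_zero,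
      sub_zero, smul_eq_mul]
    have h4 : c * s' ^ ((k:ℝ)/2 + 1) = VolM * s' := by
      rw [Real.rpow_add hs'pos, Real.rpow_one, ← mul_assoc, hcs]
    rw [← mul_div_assoc, h4]
    have hne1 : (k:ℝ)/2 + 1 ≠ 0 := by positivity
    have hne2 : (k:ℝ) + 2 ≠ 0 := by positivity
    field_simp
    ring
  have h2 : ENNReal.ofReal (∫ s in Set.Ioc (0:ℝ) s', (VolM - c * s ^ ((k:ℝ)/2)))
      = ∫⁻ s in Set.Ioc (0:ℝ) s', ENNReal.ofReal (VolM - c * s ^ ((k:ℝ)/2)) := by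
    refine ofReal_integral_eq_lintegral_ofReal ?_ ?_
    · exact (intervalIntegrable_const.sub (hrint.const_mul c)).1
    · refine (ae_restrict_iff' measurableSet_Ioc).mpr (.of_forall fun s hsm => ?_)
      have hmono : c * s ^ ((k:ℝ)/2) ≤ c * s' ^ ((k:ℝ)/2) := by
        gcongr
        exacts [hsm.1.le, hsm.2]
      rw [hcs] at hmono
      simp only [Pi.zero_apply]
      linarith
  have key : ENNReal.ofReal (((k:ℝ)/((k:ℝ)+2)) * VolM * s')
      ≤ ∫⁻ x in M, ENNReal.ofReal (f x) := by
    rw [hlayer, ← h3, h2]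
    refine le_trans (lintegral_mono_ae ((ae_restrict_iff' measurableSet_Ioc).mpr
      (.of_forall fun s hsm => tail s hsm.1))) ?_
    exact lintegral_mono_set Set.Ioc_subset_Ioi_self
  -- final constant algebra
  have hfinal : νmin * ((k:ℝ)/((k:ℝ)+2)) * ω ^ (-(2:ℝ)/k) * VolM ^ ((1:ℝ)+2/k)
      / (N:ℝ) ^ ((2:ℝ)/k) = νmin * (((k:ℝ)/((k:ℝ)+2)) * VolM * s') := by
    rw [hs', hc, Real.div_rpow hV.le (by positivity),
      Real.mul_rpow (Nat.cast_nonneg N) hωpos.le,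
      Real.rpow_add hV, Real.rpow_one, neg_div, Real.rpow_neg hωpos.le]
    have hN2 : (0:ℝ) < (N:ℝ) ^ ((2:ℝ)/k) := Real.rpow_pos_of_pos (Nat.cast_pos.mpr hN) _
    have hω2 : (0:ℝ) < ω ^ ((2:ℝ)/k) := Real.rpow_pos_of_pos hωpos _
    field_simp
  calc ENNReal.ofReal (νmin * ((k:ℝ)/((k:ℝ)+2)) * ω ^ (-(2:ℝ)/k) * VolM ^ ((1:ℝ)+2/k)
      / (N:ℝ) ^ ((2:ℝ)/k))
      = ENNReal.ofReal νmin * ENNReal.ofReal (((k:ℝ)/((k:ℝ)+2)) * VolM * s') := by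
        rw [hfinal, ENNReal.ofReal_mul hνmin.le]
    _ ≤ ENNReal.ofReal νmin * ∫⁻ x in M, ENNReal.ofReal (f x) := by gcongr
    _ ≤ ∫⁻ x in M, ENNReal.ofReal (f x * ν x) := step1
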